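/- Let {J_n} be a sequence of arcs in an L-linearly connected, N-doubling, complete metric space such that J_{n+1} εδ^n-follows J_n and J_{n+1} satisfies: d(x,y) < s·εδ^n implies diam(J_{n+1}[x,y]) < S·εδ^n, where 0 < δ ≤ min{s/(4+2S), 1/10}. Then the sequence {J_n} is Cauchy in the Hausdorff metric, with d_H(J_n, J_{n+m}) ≤ (11/9)εδ^n + Sεδ^{n-1} for all n ≥ 2 and m ≥ 0. -/

import Mathlib

open Metric Set Filter Topology

/-- A metric space is `N`-doubling if every ball can be covered by at most `N`
balls of half the radius. -/
def Doubling (X : Type*) [MetricSpace X] (N : ℕ) : Prop :=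
  ∀ (x : X) (r : ℝ), ∃ t : Finset X, t.card ≤ N ∧
    ball x r ⊆ ⋃ y ∈ t, ball y (r / 2)

/-- A set `S` is `r`-separated if distinct points of `S` are at distance at least `r`. -/
def IsSep {X : Type*} [MetricSpace X] (r : ℝ) (S : Set X) : Prop :=
  S.Pairwise (fun x y => r ≤ dist x y)

/-- `X` is `L`-linearly connected: any two points lie in a compact connected set of
diameter at most `L` times their distance. -/
def LinearlyConnected (X : Type*) [MetricSpace X] (L : ℝ) : Prop :=
  ∀ x y : X, ∃ J : Set X, IsCompact J ∧ IsConnected J ∧ x ∈ J ∧ y ∈ J ∧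
    diam J ≤ L * dist x y

/-- `f` parametrizes an arc: continuous and injective on `[0,1]`. -/
def IsArcParam {X : Type*} [MetricSpace X] (f : ℝ → X) : Prop :=
  ContinuousOn f (Icc 0 1) ∧ InjOn f (Icc 0 1)

/-- The arc parametrized by `g` `ε`-follows the arc parametrized by `f`: there is a
(coarse, not necessarily continuous) reparametrization `p` sending endpoints to
endpoints such that each subarc `g '' uIcc s t` lies in the `ε`-neighborhood of the
corresponding subarc `f '' uIcc (p s) (p t)`. -/
def Follows {X : Type*} [MetricSpace X] (ε : ℝ) (g f : ℝ → X) : Prop :=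
  ∃ p : ℝ → ℝ, MapsTo p (Icc 0 1) (Icc 0 1) ∧ p 0 = 0 ∧ p 1 = 1 ∧
    ∀ s ∈ Icc (0:ℝ) 1, ∀ t ∈ Icc (0:ℝ) 1,
      g '' uIcc s t ⊆ thickening ε (f '' uIcc (p s) (p t))

/-!
Chaining the following relations, `J (n + m + 1)` follows `J n` within `(10/9)εδⁿ`, the errors
forming a geometric series of ratio `δ ≤ 1/10`. If `g` follows a continuous arc `f` within `e`,
and subarcs of `f` whose endpoints are closer than `c > 2e` have diameter at most `D`, then
`d_H(f, g) ≤ D + e`. Points of `g` are `e`-close to `f` directly. For a point `f u`, the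
reparametrization `p` need not be continuous, but `g` is and `[0,1]` is connected, so there are
parameters `t, t'` with `p t ≤ u ≤ p t'` and `g t, g t'` arbitrarily close; then the subarc of `f`
from `f (p t)` to `f (p t')` has endpoints closer than `c`, contains `f u`, and so puts `f u` within
`D + e` of `g t`. For `J n` one takes `c = sεδⁿ⁻¹` and `D = Sεδⁿ⁻¹`; `2e < c` is where
`δ ≤ s/(4+2S)` is needed.
-/

theorem IsPreconnected.exists_dist_lt_of_subset_union {α X : Type*} [TopologicalSpace α]
    [PseudoMetricSpace X] {K A B : Set α} (hK : IsPreconnected K) {g : α → X}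
    (hg : ContinuousOn g K) (hAB : K ⊆ A ∪ B) (hA : (K ∩ A).Nonempty) (hB : (K ∩ B).Nonempty)
    {ρ : ℝ} (hρ : 0 < ρ) : ∃ a ∈ K ∩ A, ∃ b ∈ K ∩ B, dist (g a) (g b) < ρ := by
  obtain ⟨x, hxK, hxA, hxB⟩ := isPreconnected_closed_iff.1 hK _ _ isClosed_closure
    isClosed_closure
    (fun y hy => (hAB hy).imp (fun h => subset_closure (show y ∈ K ∩ A from ⟨hy, h⟩))
      (fun h => subset_closure (show y ∈ K ∩ B from ⟨hy, h⟩)))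
    (hA.mono fun y hy => ⟨hy.1, subset_closure hy⟩) (hB.mono fun y hy => ⟨hy.1, subset_closure hy⟩)
  have hnear : ∀ᶠ y in 𝓝[K] x, dist (g y) (g x) < ρ / 2 :=
    hg x hxK (ball_mem_nhds _ (half_pos hρ))
  have pick : ∀ C ⊆ K, x ∈ closure C → ∃ c ∈ C, dist (g c) (g x) < ρ / 2 := fun C hC hxC =>
    have := mem_closure_iff_nhdsWithin_neBot.1 hxC
    (eventually_mem_nhdsWithin.and (hnear.filter_mono (nhdsWithin_mono x hC))).exists
  obtain ⟨a, ha, hax⟩ := pick _ inter_subset_left hxA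
  obtain ⟨b, hb, hbx⟩ := pick _ inter_subset_left hxB
  exact ⟨a, ha, b, hb, (dist_triangle_right _ _ _).trans_lt (by linarith)⟩

namespace Follows

variable {X : Type*} [MetricSpace X] {e e' : ℝ} {f g h : ℝ → X}

theorem mono (hee' : e ≤ e') (hgf : Follows e g f) : Follows e' g f := by
  obtain ⟨p, hp, hp0, hp1, hpg⟩ := hgf
  exact ⟨p, hp, hp0, hp1, fun s hs t ht => (hpg s hs t ht).trans (thickening_mono hee' _)⟩

theorem trans (hgf : Follows e g f) (hhg : Follows e' h g) : Follows (e + e') h f := by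
  obtain ⟨p, hp, hp0, hp1, hpg⟩ := hgf
  obtain ⟨q, hq, hq0, hq1, hqh⟩ := hhg
  refine ⟨p ∘ q, hp.comp hq, by simp [hq0, hp0], by simp [hq1, hp1], fun s hs t ht => ?_⟩
  calc h '' uIcc s t ⊆ thickening e' (g '' uIcc (q s) (q t)) := hqh s hs t ht
    _ ⊆ thickening e' (thickening e (f '' uIcc (p (q s)) (p (q t)))) :=
      thickening_subset_of_subset _ (hpg _ (hq hs) _ (hq ht))
    _ ⊆ thickening (e + e') (f '' uIcc (p (q s)) (p (q t))) := by
      rw [add_comm]; exact thickening_thickening_subset _ _ _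

theorem image_subset_thickening (hgf : Follows e g f) :
    g '' Icc 0 1 ⊆ thickening e (f '' Icc 0 1) := by
  obtain ⟨p, -, hp0, hp1, hpg⟩ := hgf
  simpa [hp0, hp1, uIcc_of_le zero_le_one] using
    hpg 0 (left_mem_Icc.2 zero_le_one) 1 (right_mem_Icc.2 zero_le_one)

theorem pos (hgf : Follows e g f) : 0 < e := by
  by_contra! he
  have := hgf.image_subset_thickening (mem_image_of_mem g (left_mem_Icc.2 zero_le_one))
  rwa [thickening_of_nonpos he] at this

theorem infDist_le (hf : ContinuousOn f (Icc 0 1)) (hg : ContinuousOn g (Icc 0 1))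
    (hgf : Follows e g f) {c D : ℝ} (hc : 2 * e < c)
    (hstr : ∀ u ∈ Icc (0:ℝ) 1, ∀ v ∈ Icc (0:ℝ) 1,
      dist (f u) (f v) < c → diam (f '' uIcc u v) ≤ D)
    {u : ℝ} (hu : u ∈ Icc (0:ℝ) 1) : infDist (f u) (g '' Icc 0 1) ≤ D + e := by
  obtain ⟨p, hp, hp0, hp1, hpg⟩ := hgf
  have hnear : ∀ t ∈ Icc (0:ℝ) 1, dist (g t) (f (p t)) < e := fun t ht => by
    obtain ⟨z, hz, hgz⟩ := mem_thickening_iff.1 (hpg t ht t ht ⟨t, by simp, rfl⟩)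
    simp only [uIcc_self, image_singleton, mem_singleton_iff] at hz
    rwa [hz] at hgz
  obtain ⟨t, ⟨ht, htu⟩, t', ⟨ht', hut'⟩, hgt⟩ :=
    isPreconnected_Icc.exists_dist_lt_of_subset_union hg (A := {t | p t ≤ u})
      (B := {t | u ≤ p t}) (fun t _ => le_total (p t) u)
      ⟨0, left_mem_Icc.2 zero_le_one, by simpa [hp0] using hu.1⟩
      ⟨1, right_mem_Icc.2 zero_le_one, by simpa [hp1] using hu.2⟩ (sub_pos.2 hc)
  have hpt : dist (f (p t)) (f (p t')) < c := by
    have := dist_triangle4 (f (p t)) (g t) (g t') (f (p t'))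
    rw [dist_comm (f (p t)) (g t)] at this
    linarith [hnear t ht, hnear t' ht']
  have hbdd : Bornology.IsBounded (f '' uIcc (p t) (p t')) :=
    (isCompact_uIcc.image_of_continuousOn (hf.mono (uIcc_subset_Icc (hp ht) (hp ht')))).isBounded
  have hfu : dist (f u) (f (p t)) ≤ D :=
    (dist_le_diam_of_mem hbdd (mem_image_of_mem f (mem_uIcc.2 (Or.inl ⟨htu, hut'⟩)))
      (mem_image_of_mem f left_mem_uIcc)).trans (hstr _ (hp ht) _ (hp ht') hpt)
  calc infDist (f u) (g '' Icc 0 1) ≤ dist (f u) (g t) := infDist_le_dist_of_mem ⟨t, ht, rfl⟩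
    _ ≤ dist (f u) (f (p t)) + dist (g t) (f (p t)) := dist_triangle_right _ _ _
    _ ≤ D + e := add_le_add hfu (hnear t ht).le

theorem hausdorffDist_le (hf : ContinuousOn f (Icc 0 1)) (hg : ContinuousOn g (Icc 0 1))
    (hgf : Follows e g f) {c D : ℝ} (hc : 2 * e < c)
    (hstr : ∀ u ∈ Icc (0:ℝ) 1, ∀ v ∈ Icc (0:ℝ) 1,
      dist (f u) (f v) < c → diam (f '' uIcc u v) ≤ D) :
    hausdorffDist (f '' Icc 0 1) (g '' Icc 0 1) ≤ D + e := by
  have h0 : (0:ℝ) ∈ Icc (0:ℝ) 1 := left_mem_Icc.2 zero_le_one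
  have hD : 0 ≤ D := diam_nonneg.trans
    (hstr 0 h0 0 h0 (by rw [dist_self]; linarith [hgf.pos]))
  refine hausdorffDist_le_of_infDist (by linarith [hgf.pos])
    (by rintro _ ⟨u, hu, rfl⟩; exact hgf.infDist_le hf hg hc hstr hu) ?_
  intro x hx
  obtain ⟨y, hy, hxy⟩ := mem_thickening_iff.1 (hgf.image_subset_thickening hx)
  exact (infDist_le_dist_of_mem hy).trans (by linarith)

end Follows

theorem follows_sum_Ico_of_follows_succ {X : Type*} [MetricSpace X] {J : ℕ → ℝ → X}
    {a : ℕ → ℝ} {n : ℕ} (h : ∀ k, n ≤ k → Follows (a k) (J (k + 1)) (J k)) (m : ℕ) :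
    Follows (∑ i ∈ Finset.Ico n (n + m + 1), a i) (J (n + m + 1)) (J n) := by
  induction m with
  | zero => simpa using h n le_rfl
  | succ m ih =>
    rw [Finset.sum_Ico_succ_top (by omega)]
    exact ih.trans (h _ (by omega))

theorem sum_Ico_mul_pow_le {ε δ : ℝ} (hε : 0 ≤ ε) (hδ : 0 ≤ δ) (hδ10 : δ ≤ 1 / 10) (n m : ℕ) :
    ∑ i ∈ Finset.Ico n m, ε * δ ^ i ≤ 10 / 9 * (ε * δ ^ n) := by
  have hq : δ ^ n / (1 - δ) ≤ 10 / 9 * δ ^ n := by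
    rw [div_le_iff₀ (by linarith)]; nlinarith [pow_nonneg hδ n]
  rw [← Finset.mul_sum]
  linarith [mul_le_mul_of_nonneg_left
    ((geom_sum_Ico_le_of_lt_one (m := n) (n := m) hδ (by linarith)).trans hq) hε]

theorem hausdorffDist_le_of_follows_pow {X : Type*} [MetricSpace X] {J : ℕ → ℝ → X}
    {ε δ c D : ℝ} (hε : 0 ≤ ε) (hδ : 0 ≤ δ) (hδ10 : δ ≤ 1 / 10) {n m : ℕ}
    (hf : ContinuousOn (J n) (Icc 0 1)) (hg : ContinuousOn (J (n + m + 1)) (Icc 0 1))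
    (hfol : ∀ k, n ≤ k → Follows (ε * δ ^ k) (J (k + 1)) (J k))
    (hc : 20 / 9 * (ε * δ ^ n) < c)
    (hstr : ∀ u ∈ Icc (0:ℝ) 1, ∀ v ∈ Icc (0:ℝ) 1,
      dist (J n u) (J n v) < c → diam (J n '' uIcc u v) ≤ D) :
    hausdorffDist (J n '' Icc 0 1) (J (n + m + 1) '' Icc 0 1) ≤ D + 10 / 9 * (ε * δ ^ n) :=
  ((follows_sum_Ico_of_follows_succ hfol m).mono
    (sum_Ico_mul_pow_le hε hδ hδ10 _ _)).hausdorffDist_le hf hg (by linarith) hstr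

theorem stmt16_general {X : Type*} [MetricSpace X]
    (s S ε δ : ℝ) (hS : 0 < S) (hε : 0 < ε) (hδ : 0 < δ)
    (hδ' : δ ≤ min (s / (4 + 2 * S)) (1 / 10))
    (J : ℕ → ℝ → X) (harc : ∀ n, 1 ≤ n → IsArcParam (J n))
    (hfol : ∀ n, 1 ≤ n → Follows (ε * δ ^ n) (J (n + 1)) (J n))
    (hstr : ∀ n, 1 ≤ n → ∀ u ∈ Icc (0:ℝ) 1, ∀ v ∈ Icc (0:ℝ) 1,
      dist (J (n + 1) u) (J (n + 1) v) < s * (ε * δ ^ n) →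
        diam (J (n + 1) '' uIcc u v) < S * (ε * δ ^ n)) :
    (∀ n, 2 ≤ n → ∀ m : ℕ,
      hausdorffDist (J n '' Icc 0 1) (J (n + m) '' Icc 0 1)
        ≤ 11 / 9 * ε * δ ^ n + S * ε * δ ^ (n - 1)) ∧
    ∀ c > (0:ℝ), ∃ n0 : ℕ, ∀ n, n0 ≤ n → ∀ m : ℕ,
      hausdorffDist (J n '' Icc 0 1) (J (n + m) '' Icc 0 1) < c := by
  obtain ⟨hδs, hδ10⟩ := le_min_iff.1 hδ'
  have hsδ : 20 / 9 * δ < s := by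
    have := (le_div_iff₀ (by positivity)).1 hδs
    nlinarith
  have hbound : ∀ n, 2 ≤ n → ∀ m : ℕ, hausdorffDist (J n '' Icc 0 1) (J (n + m) '' Icc 0 1)
      ≤ 11 / 9 * ε * δ ^ n + S * ε * δ ^ (n - 1) := by
    rintro n hn (_ | m)
    · rw [add_zero, hausdorffDist_self_zero]; positivity
    obtain ⟨k, hk, rfl⟩ : ∃ k, 1 ≤ k ∧ n = k + 1 := ⟨n - 1, by omega, by omega⟩
    have hc : 20 / 9 * (ε * δ ^ (k + 1)) < s * (ε * δ ^ k) := by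
      rw [pow_succ]; nlinarith [mul_pos hε (pow_pos hδ k)]
    refine (hausdorffDist_le_of_follows_pow hε.le hδ.le hδ10 (harc _ (by omega)).1
      (harc _ (by omega)).1 (fun j hj => hfol j (by omega)) hc
      (fun u hu v hv huv => (hstr k hk u hu v hv huv).le)).trans ?_
    rw [Nat.add_sub_cancel]
    nlinarith [pow_pos hδ (k + 1)]
  refine ⟨hbound, fun c hc => ?_⟩
  have hlim : Tendsto (fun n => 11 / 9 * ε * δ ^ n + S * ε * δ ^ (n - 1)) atTop (𝓝 0) := by
    have hpow := tendsto_pow_atTop_nhds_zero_of_lt_one hδ.le (by linarith)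
    simpa using (hpow.const_mul (11 / 9 * ε)).add
      ((hpow.comp (tendsto_sub_atTop_nat 1)).const_mul (S * ε))
  obtain ⟨n0, hn0⟩ := eventually_atTop.1 ((hlim.eventually (gt_mem_nhds hc)).and
    (eventually_ge_atTop 2))
  exact ⟨n0, fun n hn m => (hbound n (hn0 n hn).2 m).trans_lt (hn0 n hn).1⟩

/-- The sequence of straightened arcs is Cauchy in the Hausdorff metric, with the
explicit bound `d_H(J n, J (n+m)) ≤ (11/9)εδⁿ + Sεδ^(n-1)` for `n ≥ 2`. -/
theorem stmt16 {X : Type*} [MetricSpace X] [CompleteSpace X] {L : ℝ} (hL : 1 ≤ L)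
    (hLC : LinearlyConnected X L) {N : ℕ} (hN : Doubling X N)
    (s S ε δ : ℝ) (hs : 0 < s) (hS : 0 < S) (hε : 0 < ε) (hδ : 0 < δ)
    (hδ' : δ ≤ min (s / (4 + 2 * S)) (1 / 10))
    (J : ℕ → ℝ → X) (harc : ∀ n, 1 ≤ n → IsArcParam (J n))
    (hfol : ∀ n, 1 ≤ n → Follows (ε * δ ^ n) (J (n + 1)) (J n))
    (hstr : ∀ n, 1 ≤ n → ∀ u ∈ Icc (0:ℝ) 1, ∀ v ∈ Icc (0:ℝ) 1,
      dist (J (n + 1) u) (J (n + 1) v) < s * (ε * δ ^ n) →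
        diam (J (n + 1) '' uIcc u v) < S * (ε * δ ^ n)) :
    (∀ n, 2 ≤ n → ∀ m : ℕ,
      hausdorffDist (J n '' Icc 0 1) (J (n + m) '' Icc 0 1)
        ≤ 11 / 9 * ε * δ ^ n + S * ε * δ ^ (n - 1)) ∧
    ∀ c > (0:ℝ), ∃ n0 : ℕ, ∀ n, n0 ≤ n → ∀ m : ℕ,
      hausdorffDist (J n '' Icc 0 1) (J (n + m) '' Icc 0 1) < c :=
  stmt16_general s S ε δ hS hε hδ hδ' J harc hfol hstr
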